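/- Let Γ be a non-elementary geometrically finite Kleinian group with Patterson–Sullivan density {ν_x}. For any Borel subset E ⊂ S², one has ∫_{k ∈ K/M} 𝔯_E(k⁻¹ g₀) dν_{p₀}(k X₀⁻) = ν_o(E). -/

import Mathlib

/-!
Common setup: the Poincaré ball model of hyperbolic 3-space, its boundary sphere,
the group of orientation preserving isometries, circles on the sphere, Kleinian
groups, Patterson–Sullivan densities, Bowen–Margulis–Sullivan and Burger–Roblin
measures, skinning measures, etc.
-/

noncomputable section

open Set MeasureTheory Filter Topology Pointwise RealInnerProductSpace
open scoped ENNReal NNReal Classical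

namespace CirclesOnSphere

/-- Euclidean 3-space. -/
abbrev E3 : Type := EuclideanSpace ℝ (Fin 3)

/-- The closed unit ball. -/
abbrev ClosedBall : Type := {x : E3 // ‖x‖ ≤ 1}

/-- The open unit ball `𝔹`, the Poincaré ball model of hyperbolic 3-space. -/
abbrev Ball : Type := {x : E3 // ‖x‖ < 1}

/-- The unit sphere `S²`, the geometric boundary of `𝔹`. -/
abbrev Sph : Type := {x : E3 // ‖x‖ = 1}

/-- The origin `o = (0,0,0)` of the ball. -/
def ballO : Ball := ⟨0, by norm_num⟩

/-- Inverse hyperbolic cosine. -/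
def arcoshR (z : ℝ) : ℝ := Real.log (z + Real.sqrt (z ^ 2 - 1))

/-- The hyperbolic distance of the Poincaré ball model (of constant curvature `-1`,
i.e. of the metric `2√(dx₁²+dx₂²+dx₃²)/(1-|x|²)`), expressed by the standard
explicit formula; the formula is relevant for `‖x‖ < 1` and `‖y‖ < 1`. -/
def hdist (x y : E3) : ℝ :=
  arcoshR (1 + 2 * ‖x - y‖ ^ 2 / ((1 - ‖x‖ ^ 2) * (1 - ‖y‖ ^ 2)))

/-- The Busemann function `β_ξ(x,y) = lim_{t→∞} (d(x,ξ_t) - d(y,ξ_t))` for a geodesic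
ray `ξ_t` tending to `ξ ∈ S²`, given by its closed formula in the ball model. -/
def busemann (ξ : Sph) (x y : Ball) : ℝ :=
  Real.log ((‖ξ.1 - x.1‖ ^ 2 / (1 - ‖x.1‖ ^ 2)) * ((1 - ‖y.1‖ ^ 2) / ‖ξ.1 - y.1‖ ^ 2))

/-- Inclusion of the sphere into the closed ball. -/
def sphInc (ξ : Sph) : ClosedBall := ⟨ξ.1, le_of_eq ξ.2⟩

/-- Boundary restriction of a self-map of the closed ball (junk value if the
boundary is not preserved). -/
def sphRestrict (f : Equiv.Perm ClosedBall) (ξ : Sph) : Sph :=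
  if h : ‖(f (sphInc ξ)).1‖ = 1 then ⟨(f (sphInc ξ)).1, h⟩ else ξ

/-- A self-homeomorphism of the closed ball is orientation preserving (as far as these
statements are concerned) iff its boundary restriction is homotopic to the identity of `S²`,
i.e. has degree `+1`. -/
def OrientationPreservingBdry (f : Equiv.Perm ClosedBall) : Prop :=
  ∃ F : C(Sph, Sph), (∀ ξ, F ξ = sphRestrict f ξ) ∧
    F.Homotopic (ContinuousMap.id Sph)

/-- An orientation preserving isometry of the Poincaré ball `𝔹`, viewed as a
homeomorphism of the closed ball preserving the open ball and the hyperbolic metric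
on it, whose boundary map has degree `+1`. -/
def IsOPIsometry (f : Equiv.Perm ClosedBall) : Prop :=
  Continuous f ∧ Continuous f.symm ∧
  (∀ x : ClosedBall, ‖x.1‖ < 1 ↔ ‖(f x).1‖ < 1) ∧
  (∀ x y : ClosedBall, ‖x.1‖ < 1 → ‖y.1‖ < 1 →
     hdist (f x).1 (f y).1 = hdist x.1 y.1) ∧
  OrientationPreservingBdry f

lemma normOne {f : Equiv.Perm ClosedBall}
    (hf3 : ∀ x : ClosedBall, ‖x.1‖ < 1 ↔ ‖(f x).1‖ < 1) (ξ : Sph) :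
    ‖(f (sphInc ξ)).1‖ = 1 := by
  refine le_antisymm (f (sphInc ξ)).2 (not_lt.mp fun hc => ?_)
  have h2 := (hf3 (sphInc ξ)).mpr hc
  have h3 : ‖ξ.1‖ < 1 := h2
  rw [ξ.2] at h3
  exact lt_irrefl 1 h3

lemma sphRestrict_eq {f : Equiv.Perm ClosedBall}
    (hf3 : ∀ x : ClosedBall, ‖x.1‖ < 1 ↔ ‖(f x).1‖ < 1) (ξ : Sph) :
    sphRestrict f ξ = ⟨(f (sphInc ξ)).1, normOne hf3 ξ⟩ := dif_pos (normOne hf3 ξ)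

lemma sphInc_sphRestrict {f : Equiv.Perm ClosedBall}
    (hf3 : ∀ x : ClosedBall, ‖x.1‖ < 1 ↔ ‖(f x).1‖ < 1) (ξ : Sph) :
    sphInc (sphRestrict f ξ) = f (sphInc ξ) := by
  rw [sphRestrict_eq hf3 ξ]; exact Subtype.ext rfl

lemma IsOPIsometry.mul {f g : Equiv.Perm ClosedBall} (hf : IsOPIsometry f)
    (hg : IsOPIsometry g) : IsOPIsometry (f * g) := by
  obtain ⟨Ff, hFf, htpf⟩ := hf.2.2.2.2
  obtain ⟨Fg, hFg, htpg⟩ := hg.2.2.2.2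
  have hmul3 : ∀ x : ClosedBall, ‖x.1‖ < 1 ↔ ‖((f * g) x).1‖ < 1 :=
    fun x => (hg.2.2.1 x).trans (hf.2.2.1 (g x))
  refine ⟨hf.1.comp hg.1, hg.2.1.comp hf.2.1, hmul3,
    fun x y hx hy => ?_,
    ⟨Ff.comp Fg, fun ξ => ?_, ?_⟩⟩
  · show hdist (f (g x)).1 (f (g y)).1 = hdist x.1 y.1
    rw [hf.2.2.2.1 (g x) (g y) ((hg.2.2.1 x).mp hx) ((hg.2.2.1 y).mp hy)]
    exact hg.2.2.2.1 x y hx hy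
  · show Ff (Fg ξ) = sphRestrict (f * g) ξ
    rw [hFf, hFg, sphRestrict_eq hmul3 ξ, sphRestrict_eq hf.2.2.1]
    exact Subtype.ext (congrArg (fun z => (f z).1) (sphInc_sphRestrict hg.2.2.1 ξ))
  · have := ContinuousMap.Homotopic.comp htpf htpg
    simpa using this

lemma IsOPIsometry.inv {f : Equiv.Perm ClosedBall} (hf : IsOPIsometry f) :
    IsOPIsometry f⁻¹ := by
  obtain ⟨Ff, hFf, htpf⟩ := hf.2.2.2.2
  have hi3 : ∀ x : ClosedBall, ‖x.1‖ < 1 ↔ ‖(f⁻¹ x).1‖ < 1 := by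
    intro x
    have h := hf.2.2.1 (f.symm x)
    rw [Equiv.apply_symm_apply] at h
    exact h.symm
  have hcontinv : Continuous (f.symm : ClosedBall → ClosedBall) := hf.2.1
  let Finv : C(Sph, Sph) :=
    ⟨fun ξ => ⟨(f.symm (sphInc ξ)).1, normOne hi3 ξ⟩, by
      refine Continuous.subtype_mk ?_ _
      exact continuous_subtype_val.comp (hcontinv.comp
        (Continuous.subtype_mk continuous_subtype_val _))⟩
  refine ⟨hf.2.1, by simpa [Equiv.Perm.inv_def] using hf.1, hi3, fun x y hx hy => ?_, ⟨Finv, fun ξ => ?_, ?_⟩⟩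
  · have h := hf.2.2.2.1 (f.symm x) (f.symm y) ((hi3 x).mp hx) ((hi3 y).mp hy)
    rw [Equiv.apply_symm_apply, Equiv.apply_symm_apply] at h
    exact h.symm
  · rw [sphRestrict_eq hi3 ξ]; exact Subtype.ext rfl
  · -- Finv ∘ Ff = id, hence Finv ≃ id
    have hcomp : Finv.comp Ff = ContinuousMap.id Sph := by
      apply ContinuousMap.ext; intro ξ
      apply Subtype.ext
      show (f.symm (sphInc (Ff ξ))).1 = ξ.1
      rw [hFf, sphInc_sphRestrict hf.2.2.1, Equiv.symm_apply_apply]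
      rfl
    have h1 : (Finv.comp Ff).Homotopic (Finv.comp (ContinuousMap.id Sph)) :=
      ContinuousMap.Homotopic.comp (ContinuousMap.Homotopic.refl Finv) htpf
    rw [hcomp, ContinuousMap.comp_id] at h1
    exact h1.symm

lemma IsOPIsometry.one : IsOPIsometry 1 := by
  refine ⟨by simpa using continuous_id, by simpa [Equiv.Perm.one_def] using continuous_id,
    fun x => Iff.rfl, fun x y _ _ => rfl,
    ⟨ContinuousMap.id Sph, fun ξ => ?_, ContinuousMap.Homotopic.refl _⟩⟩
  have h : ‖((1 : Equiv.Perm ClosedBall) (sphInc ξ)).1‖ = 1 := ξ.2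
  simp only [sphRestrict, dif_pos h]
  exact Subtype.ext rfl

/-- The group `G` of orientation preserving isometries of `𝔹`. -/
def Gisom : Subgroup (Equiv.Perm ClosedBall) where
  carrier := {f | IsOPIsometry f}
  one_mem' := IsOPIsometry.one
  mul_mem' := fun hf hg => IsOPIsometry.mul hf hg
  inv_mem' := fun hf => IsOPIsometry.inv hf

/-- The group of orientation preserving isometries of hyperbolic 3-space. -/
abbrev G : Type := ↥Gisom

lemma mem_Gisom {f : Equiv.Perm ClosedBall} : f ∈ Gisom ↔ IsOPIsometry f := Iff.rfl

lemma GtoOP (g : G) : IsOPIsometry (g : Equiv.Perm ClosedBall) := g.2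

instance : SMul G ClosedBall := ⟨fun g x => (g : Equiv.Perm ClosedBall) x⟩

instance : MulAction G ClosedBall where
  one_smul _ := rfl
  mul_smul _ _ _ := rfl

instance : SMul G Ball :=
  ⟨fun g x => ⟨((g : Equiv.Perm ClosedBall) ⟨x.1, le_of_lt x.2⟩).1,
    ((GtoOP g).2.2.1 ⟨x.1, le_of_lt x.2⟩).mp x.2⟩⟩

instance : MulAction G Ball where
  one_smul _ := Subtype.ext rfl
  mul_smul _ _ _ := Subtype.ext rfl

instance : SMul G Sph :=
  ⟨fun g ξ => ⟨((g : Equiv.Perm ClosedBall) (sphInc ξ)).1, by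
    refine le_antisymm ((g : Equiv.Perm ClosedBall) (sphInc ξ)).2 (not_lt.mp fun hc => ?_)
    have h2 := ((GtoOP g).2.2.1 (sphInc ξ)).mpr hc
    have h3 : ‖ξ.1‖ < 1 := h2
    rw [ξ.2] at h3
    exact lt_irrefl 1 h3⟩⟩

instance : MulAction G Sph where
  one_smul _ := Subtype.ext rfl
  mul_smul _ _ _ := Subtype.ext rfl

/-- The topology on `G` (uniform/pointwise convergence together with inverses). -/
instance : TopologicalSpace G :=
  TopologicalSpace.induced
    (fun g : G => ((fun x : ClosedBall => g • x), (fun x : ClosedBall => g⁻¹ • x)))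
    inferInstance

instance : MeasurableSpace G := borel G

/-! ### Circles on the sphere -/

/-- The circle on `S²` cut out by the plane `⟪v,·⟫ = c`. -/
def circleSet (v : E3) (c : ℝ) : Set Sph := {ξ | (inner ℝ v ξ.1 : ℝ) = c}

/-- A circle on the sphere `S²`. -/
def IsCircle (C : Set Sph) : Prop :=
  ∃ v c, ‖v‖ = 1 ∧ |c| < 1 ∧ C = circleSet v c

/-- The convex hull `Ĉ ⊆ 𝔹` of a circle `C ⊆ S²`: the totally geodesic hyperbolic
plane with boundary `C` (in the ball model, the sphere orthogonal to `S²` through `C`). -/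
def hullOf (C : Set Sph) : Set Ball :=
  {p | ∃ v c, ‖v‖ = 1 ∧ |c| < 1 ∧ C = circleSet v c ∧
        c * (‖p.1‖ ^ 2 + 1) = 2 * (inner ℝ v p.1 : ℝ)}

/-- The spherical radius `θ(C) ∈ (0, π/2]`: half of the visual angle of `C` from
the origin. -/
def sphRadius (C : Set Sph) : ℝ :=
  sSup {r | ∃ v c, ‖v‖ = 1 ∧ |c| < 1 ∧ C = circleSet v c ∧ r = Real.arccos |c|}

/-- The spherical curvature `Curv_S(C) = cot θ(C)` of a circle `C ⊆ S²`. -/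
def sphCurv (C : Set Sph) : ℝ :=
  sSup {r | ∃ v c, ‖v‖ = 1 ∧ |c| < 1 ∧ C = circleSet v c ∧ r = |c| / Real.sqrt (1 - c ^ 2)}

/-- `D` is an open disk enclosed by the circle `C`. -/
def IsEnclosedDisk (C D : Set Sph) : Prop :=
  ∃ v c, ‖v‖ = 1 ∧ |c| < 1 ∧ C = circleSet v c ∧ D = {ξ : Sph | c < (inner ℝ v ξ.1 : ℝ)}

/-- The hyperbolic distance `d(Ĉ, x)` from a point `x ∈ 𝔹` to the convex hull of `C`. -/
def hullDist (C : Set Sph) (x : Ball) : ℝ :=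
  sInf {r | ∃ p ∈ hullOf C, r = hdist p.1 x.1}

/-! ### Kleinian groups -/

/-- Discreteness of a subgroup of `G`, expressed through proper discontinuity of its
action on `𝔹`. -/
def IsDiscrete (Γ : Subgroup G) : Prop :=
  ∀ (x : Ball) (r : ℝ), {γ : G | γ ∈ Γ ∧ hdist ((γ • x : Ball)).1 x.1 ≤ r}.Finite

/-- Torsion-freeness. -/
def IsTorsionFreeSubgroup (Γ : Subgroup G) : Prop :=
  ∀ γ ∈ Γ, γ ≠ 1 → ∀ n : ℕ, 0 < n → γ ^ n ≠ 1

/-- A Kleinian group: a torsion-free discrete subgroup of `G`. -/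
def IsKleinian (Γ : Subgroup G) : Prop := IsTorsionFreeSubgroup Γ ∧ IsDiscrete Γ

/-- `Γ` is non-elementary: it has no abelian subgroup of finite index. -/
def NonElementary (Γ : Subgroup G) : Prop :=
  ¬ ∃ Λ : Subgroup G, Λ ≤ Γ ∧ (Λ.subgroupOf Γ).FiniteIndex ∧
      ∀ a ∈ Λ, ∀ b ∈ Λ, a * b = b * a

/-- The limit set `Λ(Γ) ⊆ S²`: the set of accumulation points of a `Γ`-orbit in
`𝔹 ∪ S²`. -/
def limitSet (Γ : Subgroup G) : Set Sph :=
  {ξ | ξ.1 ∈ closure (Set.range fun γ : ↥Γ => (((γ : G) • ballO : Ball)).1)}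

/-- The domain of discontinuity `Ω(Γ) = S² ∖ Λ(Γ)`. -/
def domOfDisc (Γ : Subgroup G) : Set Sph := (limitSet Γ)ᶜ

/-- The critical exponent `δ_Γ`, the abscissa of convergence of the Poincaré series. -/
def critExp (Γ : Subgroup G) : ℝ :=
  sInf {s : ℝ | Summable fun γ : ↥Γ =>
    Real.exp (-s * hdist (((γ : G) • ballO : Ball)).1 (ballO : Ball).1)}

/-- A (hyperbolic) half-space of `𝔹`, bounded by a totally geodesic plane. -/
def halfSpaceB (v : E3) (c : ℝ) : Set Ball :=
  {p | c * (‖p.1‖ ^ 2 + 1) ≤ 2 * (inner ℝ v p.1 : ℝ)}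

/-- A fundamental domain for `Γ` in `𝔹`. -/
def IsFundDomBall (Γ : Subgroup G) (D : Set Ball) : Prop :=
  (∀ x : Ball, ∃ γ ∈ Γ, γ • x ∈ D) ∧
  ∀ γ ∈ Γ, γ ≠ 1 → Disjoint (interior D) ((γ • ·) '' interior D)

/-- Geometric finiteness: `Γ` admits a finite sided (polyhedral) fundamental domain
in `𝔹`. -/
def GeometricallyFinite (Γ : Subgroup G) : Prop :=
  ∃ (s : Finset (E3 × ℝ)) (D : Set Ball),
    D = ⋂ q ∈ s, halfSpaceB q.1 q.2 ∧ IsFundDomBall Γ D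

/-- The geodesic line in `𝔹` with endpoints `ξ ≠ η` on `S²` (via the Gromov product
characterization in the ball model). -/
def geodLine (ξ η : Sph) : Set Ball :=
  {z | busemann ξ z ballO + busemann η z ballO = 2 * Real.log (2 / ‖ξ.1 - η.1‖)}

/-- Hyperbolic convexity of a subset of `𝔹`. -/
def IsHypConvex (S : Set Ball) : Prop :=
  ∀ x ∈ S, ∀ y ∈ S, ∀ z : Ball,
    hdist x.1 z.1 + hdist z.1 y.1 = hdist x.1 y.1 → z ∈ S

/-- The convex hull in `𝔹` of the limit set: the minimal convex set containing all
geodesics connecting any two points of `Λ(Γ)`. -/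
def convexCoreSet (Γ : Subgroup G) : Set Ball :=
  ⋂₀ {S | IsHypConvex S ∧
      (⋃ ξ ∈ limitSet Γ, ⋃ η ∈ limitSet Γ, geodLine ξ η) ⊆ S}

/-- The quotient `Γ\𝔹`. -/
abbrev ballQuot (Γ : Subgroup G) : Type := Quotient (MulAction.orbitRel ↥Γ Ball)

/-- `Γ` is convex cocompact: the convex core (the image of the convex hull of the
limit set in `Γ\𝔹`) is compact. -/
def IsConvexCocompact (Γ : Subgroup G) : Prop :=
  IsCompact ((fun x : Ball => (Quotient.mk (MulAction.orbitRel ↥Γ Ball) x : ballQuot Γ)) ''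
    convexCoreSet Γ)

/-- `g ∈ G` is parabolic iff it has a unique fixed point on `S²`. -/
def IsParabolic (g : G) : Prop := ∃! ξ : Sph, g • ξ = ξ

/-- `H = Stab_G(Ĉ)`, the stabilizer in `G` of the convex hull of the circle `C`. -/
def stabH (C : Set Sph) : Subgroup G := MulAction.stabilizer G (hullOf C)

/-- The stabilizer in `G` of a subset of the sphere. -/
def stabCircle (C : Set Sph) : Subgroup G := MulAction.stabilizer G C

/-- `K = Stab_G(p₀)`. -/
def Kstab (p : Ball) : Subgroup G := MulAction.stabilizer G p

/-! ### Circle packings and counting -/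

/-- The orbit `Γ(C)` of a circle. -/
def orbitOfCircle (Γ : Subgroup G) (C : Set Sph) : Set (Set Sph) := {D | ∃ γ ∈ Γ, D = γ • C}

/-- Local finiteness of a circle packing: for every `T > 1` there are only finitely
many circles of spherical curvature at most `T`. -/
def LocallyFinitePacking (P : Set (Set Sph)) : Prop :=
  ∀ T : ℝ, 1 < T → {C | C ∈ P ∧ sphCurv C ≤ T}.Finite

/-- `N_T(P, E)`: the number of circles of `P` meeting `E` of spherical curvature
less than `T`. -/
def NcurvCount (P : Set (Set Sph)) (Es : Set Sph) (T : ℝ) : ℕ :=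
  Set.ncard {C | C ∈ P ∧ (C ∩ Es).Nonempty ∧ sphCurv C < T}

/-- `#{C ∈ P : C ∩ E ≠ ∅, d(Ĉ, o) < T}`. -/
def NdistCount (P : Set (Set Sph)) (Es : Set Sph) (o : Ball) (T : ℝ) : ℕ :=
  Set.ncard {C | C ∈ P ∧ (C ∩ Es).Nonempty ∧ hullDist C o < T}

/-- `#{C ∈ P : d(Ĉ, o) < T}`. -/
def NdistAll (P : Set (Set Sph)) (o : Ball) (T : ℝ) : ℕ :=
  Set.ncard {C | C ∈ P ∧ hullDist C o < T}

/-! ### Conformal densities and the associated measures -/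

/-- The Patterson–Sullivan density for `Γ`: a `Γ`-invariant conformal density of
dimension `δ_Γ` supported on the limit set. -/
def IsPSDensity (Γ : Subgroup G) (ν : Ball → Measure Sph) : Prop :=
  (∀ x, ν x ≠ 0) ∧ (∀ x, IsFiniteMeasure (ν x)) ∧
  (∀ x, ν x (limitSet Γ)ᶜ = 0) ∧
  (∀ γ ∈ Γ, ∀ x : Ball, Measure.map (fun ξ => γ • ξ) (ν x) = ν (γ • x)) ∧
  (∀ x y : Ball, ν y = (ν x).withDensity fun ξ =>
      ENNReal.ofReal (Real.exp (-(critExp Γ) * busemann ξ y x)))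

/-- A `G`-invariant conformal density `{m_x}` of dimension `2` on `S²`. -/
def IsConfDensity2 (m : Ball → Measure Sph) : Prop :=
  (∀ x, m x ≠ 0) ∧ (∀ x, IsFiniteMeasure (m x)) ∧
  (∀ g : G, ∀ x : Ball, Measure.map (fun ξ => g • ξ) (m x) = m (g • x)) ∧
  (∀ x y : Ball, m y = (m x).withDensity fun ξ =>
      ENNReal.ofReal (Real.exp (-2 * busemann ξ y x)))

/-- The unit tangent bundle `T¹(𝔹)`, in the coordinates
`u ↦ (u⁺, u⁻, s = β_{u⁻}(π(u), o))`. -/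
abbrev T1 : Type := (Sph × Sph) × ℝ

/-- The (lifted) Bowen–Margulis–Sullivan measure
`dm̃^BMS(u) = e^{δ β_{u⁺}(x,π(u))} e^{δ β_{u⁻}(x,π(u))} dν_x(u⁺) dν_x(u⁻) dt`
on `T¹(𝔹)`, expressed in the coordinates above with `x = o` (the density is then
`(2/|u⁺-u⁻|)^{2δ}`, twice the `δ`-th power of the exponentiated Gromov product). -/
def tildeBMS (ν : Measure Sph) (δ : ℝ) : Measure T1 :=
  ((ν.prod ν).prod volume).withDensity fun u =>
    ENNReal.ofReal ((2 / ‖u.1.1.1 - u.1.2.1‖) ^ (2 * δ))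

/-- The (lifted) Burger–Roblin measure
`dm̃^BR(u) = e^{2 β_{u⁺}(x,π(u))} e^{δ β_{u⁻}(x,π(u))} dm_x(u⁺) dν_x(u⁻) dt`
on `T¹(𝔹)`, in the same coordinates with `x = o`. -/
def tildeBR (m ν : Measure Sph) (δ : ℝ) : Measure T1 :=
  ((m.prod ν).prod volume).withDensity fun u =>
    ENNReal.ofReal ((2 / ‖u.1.1.1 - u.1.2.1‖) ^ (4 : ℝ) * Real.exp ((2 - δ) * u.2))

/-- The `G`-action on `T¹(𝔹)` in the above coordinates. -/
def smulT1 (γ : G) (u : T1) : T1 :=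
  ((γ • u.1.1, γ • u.1.2), u.2 + busemann u.1.2 ballO (γ⁻¹ • ballO))

/-- A (Borel, strict) fundamental domain for the `Γ`-action on `T¹(𝔹)`;
integrating over it realizes measures on `T¹(Γ\𝔹)`. -/
def IsFundDomT1 (Γ : Subgroup G) (F : Set T1) : Prop :=
  MeasurableSet F ∧ (∀ u : T1, ∃ γ ∈ Γ, smulT1 γ u ∈ F) ∧
  ∀ γ ∈ Γ, γ ≠ 1 → Disjoint F (smulT1 γ '' F)

/-- For a unit normal vector `s` to `Ĉ` with `s⁺ = ξ`, the quantity
`β_{s⁺}(x, π(s)) = sup_{p ∈ Ĉ} β_ξ(x, p)` (the sup is attained at the foot `π(s)`). -/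
def footSup (C : Set Sph) (x : Ball) (ξ : Sph) : ℝ :=
  sSup {r | ∃ p ∈ hullOf C, r = busemann ξ x p}

/-- The density `e^{d·β_{s⁺}(x,π(s))}` on `C† ≅ S² ∖ C` (via `s ↦ s⁺`). -/
def normalDensity (d : ℝ) (C : Set Sph) (x : Ball) (ξ : Sph) : ℝ :=
  Real.exp (d * footSup C x ξ)

/-- A (Borel, strict) fundamental domain `F ⊆ W` for the `Λ`-action on `W ⊆ S²`. -/
def IsFundDomSph (Λ : Subgroup G) (W F : Set Sph) : Prop :=
  MeasurableSet F ∧ F ⊆ W ∧ (∀ ξ ∈ W, ∃ γ ∈ Λ, γ • ξ ∈ F) ∧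
  ∀ γ ∈ Λ, γ ≠ 1 → Disjoint F ((γ • ·) '' F)

/-- The skinning mass `∫_{Stab_Γ(C†)\C†} e^{d β_{s⁺}(x,π(s))} dν_x(s⁺)` of one circle,
realized as an integral over a fundamental domain `F ⊆ S² ∖ C ≅ C†`. -/
def skinMass (d : ℝ) (μ : Measure Sph) (C : Set Sph) (x : Ball) (F : Set Sph) : ℝ≥0∞ :=
  ∫⁻ ξ in F, ENNReal.ofReal (normalDensity d C x ξ) ∂μ

/-- `μ^Leb` on `C† ≅ S² ∖ C`: the measure `e^{2β_{s⁺}(x,π(s))} dm_x(s⁺)`. -/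
def muLeb (m₀ : Measure Sph) (C : Set Sph) : Measure Sph :=
  m₀.withDensity fun ξ => ENNReal.ofReal (normalDensity 2 C ballO ξ)

/-- The Burger–Roblin integral `m^BR_Γ(φ)` of a function `φ` on `Γ\G/M ≅ Γ\T¹(𝔹)`,
realized via a fundamental domain `F ⊆ T¹(𝔹)` and a section `τ : T¹(𝔹) → G`. -/
def mBRint (m ν : Measure Sph) (δ : ℝ) (F : Set T1) (τ : T1 → G) (φ : G → ℝ) : ℝ :=
  ∫ u in F, φ (τ u) ∂(tildeBR m ν δ)

/-! ### The subgroups `K`, `M`, `N` and related data -/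

/-- `M`: the centralizer of `A = {a_t}` in `K`. -/
def Msub (p₀ : Ball) (aOP : ℝ → G) : Subgroup G :=
  Subgroup.centralizer (Set.range aOP) ⊓ Kstab p₀

/-- `N`: the expanding horospherical subgroup `{g : a_t g a_t⁻¹ → e}` for `A⁺`. -/
def Ngrp (aOP : ℝ → G) : Set G :=
  {g | ∀ δ > (0:ℝ), ∃ T : ℝ, ∀ t ≥ T, ∀ x : ClosedBall,
    ‖(((aOP t * g * (aOP t)⁻¹) • x : ClosedBall)).1 - x.1‖ < δ}

/-- The function `𝔯_E` on `G`: `𝔯_E(a_t n k) = e^{-δ_Γ t} χ_{(g₀⁻¹E)_{p₀}}(k⁻¹)`. -/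
def frakR (Γ : Subgroup G) (p₀ : Ball) (aOP : ℝ → G) (g₀ : G) (X₀m : Sph)
    (Es : Set Sph) (g : G) : ℝ :=
  sSup {r | ∃ t n k, n ∈ Ngrp aOP ∧ k ∈ Kstab p₀ ∧ g = aOP t * n * k ∧
      r = if k⁻¹ • X₀m ∈ g₀⁻¹ • Es then Real.exp (-(critExp Γ) * t) else 0}

/-- A fixed left invariant metric on `G`, compatible with its topology. -/
structure LeftInvMetric where
  d : G → G → ℝ
  nonneg : ∀ g h, 0 ≤ d g h
  eq_iff : ∀ g h, d g h = 0 ↔ g = h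
  symm : ∀ g h, d g h = d h g
  triangle : ∀ g h k, d g k ≤ d g h + d h k
  leftInvariant : ∀ k g h, d (k * g) (k * h) = d g h
  compat : ∀ s : Set G, IsOpen s ↔ ∀ g ∈ s, ∃ ε > 0, ∀ h, d g h < ε → h ∈ s

/-- `U_ε`: the ε-ball around the identity of `G`. -/
def LeftInvMetric.ball (dm : LeftInvMetric) (ε : ℝ) : Set G := {g | dm.d 1 g < ε}

/-- `E_ε⁺ = g₀ U_ε g₀⁻¹ (E)`. -/
def Eplus (dm : LeftInvMetric) (g₀ : G) (ε : ℝ) (Es : Set Sph) : Set Sph :=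
  ⋃ u ∈ dm.ball ε, (g₀ * u * g₀⁻¹) • Es

/-- `E_ε⁻ = ∩_{u ∈ U_ε} g₀ u g₀⁻¹ (E)`. -/
def Eminus (dm : LeftInvMetric) (g₀ : G) (ε : ℝ) (Es : Set Sph) : Set Sph :=
  ⋂ u ∈ dm.ball ε, (g₀ * u * g₀⁻¹) • Es

/-- `P`-admissibility of `E ⊆ S²`: for any `C ∈ P` (with designated enclosed open
disk `C°`), `C° ∩ E ≠ ∅` implies `C° ⊆ E`, except for finitely many circles. -/
def IsAdmissible (P : Set (Set Sph)) (Es : Set Sph) : Prop :=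
  ∃ disk : Set Sph → Set Sph,
    (∀ C ∈ P, IsEnclosedDisk C (disk C)) ∧
    {C | C ∈ P ∧ (disk C ∩ Es).Nonempty ∧ ¬ disk C ⊆ Es}.Finite

/-! ### The projection `(Γ∩H)\Ĉ₀ → Γ\𝔹` -/

/-- The `(Γ ∩ H)`-orbit equivalence on `Ĉ₀`. -/
def hullSetoid (Γ : Subgroup G) (C : Set Sph) : Setoid ↥(hullOf C) where
  r p q := ∃ γ ∈ stabH C ⊓ Γ, γ • (p : Ball) = (q : Ball)
  iseqv := by
    refine ⟨fun p => ⟨1, one_mem _, one_smul _ _⟩, ?_, ?_⟩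
    · rintro p q ⟨γ, hγ, h⟩
      exact ⟨γ⁻¹, inv_mem hγ, by rw [← h, inv_smul_smul]⟩
    · rintro p q r ⟨γ, hγ, h⟩ ⟨γ', hγ', h'⟩
      exact ⟨γ' * γ, mul_mem hγ' hγ, by rw [mul_smul, h, h']⟩

/-- The natural projection `(Γ ∩ H)\Ĉ₀ → Γ\𝔹`. -/
def projHull (Γ : Subgroup G) (C : Set Sph) :
    Quotient (hullSetoid Γ C) → ballQuot Γ :=
  Quotient.lift (fun p => Quotient.mk (MulAction.orbitRel ↥Γ Ball) (p : Ball))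
    (by
      rintro p q ⟨γ, hγ, h⟩
      refine Quotient.sound ⟨⟨γ⁻¹, inv_mem hγ.2⟩, ?_⟩
      show γ⁻¹ • (q : Ball) = (p : Ball)
      rw [← h, inv_smul_smul])

/-! ### Test functions -/

/-- `ψ ∈ C_c(Γ\G/M)`: a continuous function on `G`, left `Γ`-invariant, right
`M`-invariant, compactly supported modulo `Γ`. -/
def IsCcGammaGmodM (Γ : Subgroup G) (p₀ : Ball) (aOP : ℝ → G) (ψ : G → ℝ) : Prop :=
  Continuous ψ ∧ (∀ γ ∈ Γ, ∀ g, ψ (γ * g) = ψ g) ∧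
  (∀ m ∈ Msub p₀ aOP, ∀ g, ψ (g * m) = ψ g) ∧
  ∃ κ : Set Ball, IsCompact κ ∧ ∀ g : G, ψ g ≠ 0 → ∃ γ ∈ Γ, (γ * g) • p₀ ∈ κ

/-- `ψ ∈ C_c(Γ\G)`. -/
def IsCcGammaG (Γ : Subgroup G) (p₀ : Ball) (ψ : G → ℝ) : Prop :=
  Continuous ψ ∧ (∀ γ ∈ Γ, ∀ g, ψ (γ * g) = ψ g) ∧
  ∃ κ : Set Ball, IsCompact κ ∧ ∀ g : G, ψ g ≠ 0 → ∃ γ ∈ Γ, (γ * g) • p₀ ∈ κ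

/-- `Ψ^ε(g) = Σ_{γ ∈ Γ} ψ^ε(γ g)`. -/
def PsiSum (Γ : Subgroup G) (ψ : G → ℝ) (g : G) : ℝ := ∑' γ : ↥Γ, ψ ((γ : G) * g)

/-- `Ψ^ε_E(g) = ∫_{k⁻¹ ∈ (g₀⁻¹E)_{p₀}} Ψ^ε(g k g₀⁻¹) dm_{p₀}(k)`, where `μK` is the
lift to `K` of the measure `dm_{p₀}(k) = dm_{p₀}((k X₀)⁺)`. -/
def PsiE (Γ : Subgroup G) (g₀ : G) (X₀m : Sph) (μK : Measure G) (ψ : G → ℝ)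
    (Es : Set Sph) (g : G) : ℝ :=
  ∫ k in {k : G | k⁻¹ • X₀m ∈ g₀⁻¹ • Es}, PsiSum Γ ψ (g * k * g₀⁻¹) ∂μK

/-! ### The sets `B_T(E) ⊆ H\G` and the counting functions `F_T` -/

/-- `B_T(E) = [e] K A_T⁺ (g₀⁻¹E)_{p₀}⁻¹ g₀⁻¹ ⊆ H\G`. -/
def BTset (C₀ : Set Sph) (p₀ : Ball) (aOP : ℝ → G) (g₀ : G) (X₀m : Sph)
    (Es : Set Sph) (T : ℝ) : Set (Quotient (QuotientGroup.rightRel (stabH C₀))) :=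
  {x | ∃ k₁ ∈ Kstab p₀, ∃ t, 0 ≤ t ∧ t ≤ T ∧
    ∃ k, (k ∈ Kstab p₀ ∧ k • X₀m ∈ g₀⁻¹ • Es) ∧
      x = Quotient.mk (QuotientGroup.rightRel (stabH C₀)) (k₁ * aOP t * k⁻¹ * g₀⁻¹)}

/-- `F(g) = Σ_{γ ∈ (Γ∩H)\Γ} χ_B([e] γ g)` for `B ⊆ H\G`. -/
def FTcount (Γ : Subgroup G) (C₀ : Set Sph)
    (B : Set (Quotient (QuotientGroup.rightRel (stabH C₀)))) (g : G) : ℕ :=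
  Set.ncard {x | x ∈ B ∧ ∃ γ ∈ Γ, x = Quotient.mk (QuotientGroup.rightRel (stabH C₀)) (γ * g)}

end CirclesOnSphere

namespace CirclesOnSphere

/-!
Write `g = aₜ n k` in `ANK`. Both `aₜ` and `n` fix `X₀⁻` (each moves the points `a₋ₛ p₀ → X₀⁻`
a bounded hyperbolic distance), and `t = β_{X₀⁻}(g p₀, p₀)`: for `aₜ` this is read off the
geodesic `s ↦ aₛ p₀`, while `β_{X₀⁻}(n p₀, p₀)` is unchanged under conjugating `n` by `aₛ`
and tends to `0` as `aₛ n a₋ₛ → e`. Hence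
`𝔯_E(g) = χ(g⁻¹X₀⁻ ∈ g₀⁻¹E) e^{-δ_Γ β_{X₀⁻}(g p₀, p₀)}`, which at `g = k⁻¹ g₀` with
`k X₀⁻ = η` equals `χ_E(η) e^{-δ_Γ β_η(o, p₀)}`: the density of `ν_o` with respect to `ν_{p₀}`.
-/

lemma one_sub_norm_sq_pos (x : Ball) : 0 < 1 - ‖x.1‖ ^ 2 := by
  have := x.2
  have := norm_nonneg x.1
  nlinarith

lemma norm_sph_sub_ball_pos (ξ : Sph) (x : Ball) : 0 < ‖ξ.1 - x.1‖ := by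
  refine norm_sub_pos_iff.mpr fun h => ?_
  have hx := x.2
  rw [← h, ξ.2] at hx
  exact lt_irrefl 1 hx

section Busemann

lemma busemann_eq_log_sub_log (ξ : Sph) (x y : Ball) :
    busemann ξ x y = Real.log (‖ξ.1 - x.1‖ ^ 2 / (1 - ‖x.1‖ ^ 2))
      - Real.log (‖ξ.1 - y.1‖ ^ 2 / (1 - ‖y.1‖ ^ 2)) := by
  have hx := div_pos (pow_pos (norm_sph_sub_ball_pos ξ x) 2) (one_sub_norm_sq_pos x)
  have hy := div_pos (pow_pos (norm_sph_sub_ball_pos ξ y) 2) (one_sub_norm_sq_pos y)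
  rw [busemann, ← inv_div (‖ξ.1 - y.1‖ ^ 2), Real.log_mul hx.ne' (inv_ne_zero hy.ne'),
    Real.log_inv]
  ring

lemma busemann_cocycle (ξ : Sph) (x y z : Ball) :
    busemann ξ x z = busemann ξ x y + busemann ξ y z := by
  simp only [busemann_eq_log_sub_log]
  ring

lemma busemann_self (ξ : Sph) (x : Ball) : busemann ξ x x = 0 := by
  rw [busemann_eq_log_sub_log, sub_self]

lemma continuous_busemann_left (ξ : Sph) (y : Ball) :
    Continuous fun x : Ball => busemann ξ x y := by
  simp only [busemann_eq_log_sub_log]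
  refine (Continuous.log ?_ fun x => ?_).sub continuous_const
  · exact Continuous.div (by fun_prop) (by fun_prop) fun x => (one_sub_norm_sq_pos x).ne'
  · exact (div_pos (pow_pos (norm_sph_sub_ball_pos ξ x) 2) (one_sub_norm_sq_pos x)).ne'

end Busemann

section HyperbolicDistance

lemma hdist_comm (x y : E3) : hdist x y = hdist y x := by
  rw [hdist, hdist, norm_sub_rev, mul_comm (1 - ‖x‖ ^ 2)]

lemma hdist_self (x : E3) : hdist x x = 0 := by
  simp [hdist, arcoshR]

lemma hdist_smul (g : G) (x y : Ball) : hdist (g • x).1 (g • y).1 = hdist x.1 y.1 :=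
  (GtoOP g).2.2.2.1 ⟨x.1, x.2.le⟩ ⟨y.1, y.2.le⟩ x.2 y.2

lemma continuous_hdist_left (p : Ball) : Continuous fun x : Ball => hdist x.1 p.1 := by
  have hnonneg : ∀ x : Ball,
      0 ≤ 2 * ‖x.1 - p.1‖ ^ 2 / ((1 - ‖x.1‖ ^ 2) * (1 - ‖p.1‖ ^ 2)) := fun x =>
    div_nonneg (by positivity) (mul_pos (one_sub_norm_sq_pos x) (one_sub_norm_sq_pos p)).le
  have hu : Continuous fun x : Ball =>
      1 + 2 * ‖x.1 - p.1‖ ^ 2 / ((1 - ‖x.1‖ ^ 2) * (1 - ‖p.1‖ ^ 2)) :=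
    continuous_const.add (Continuous.div (by fun_prop) (by fun_prop) fun x =>
      (mul_pos (one_sub_norm_sq_pos x) (one_sub_norm_sq_pos p)).ne')
  refine (hu.add ((hu.pow 2).sub continuous_const).sqrt).log fun x => ?_
  exact (add_pos_of_pos_of_nonneg (by linarith [hnonneg x]) (Real.sqrt_nonneg _)).ne'

lemma norm_sub_sq_le_of_hdist (u v : Ball) :
    ‖u.1 - v.1‖ ^ 2 ≤ (Real.exp (hdist u.1 v.1) - 1) * (1 - ‖v.1‖ ^ 2) := by
  have hu := one_sub_norm_sq_pos u
  have hv := one_sub_norm_sq_pos v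
  set w := 1 + 2 * ‖u.1 - v.1‖ ^ 2 / ((1 - ‖u.1‖ ^ 2) * (1 - ‖v.1‖ ^ 2)) with hw
  have hw1 : 1 ≤ w := le_add_of_nonneg_right (div_nonneg (by positivity) (mul_pos hu hv).le)
  have hw_le : w ≤ Real.exp (hdist u.1 v.1) := by
    calc w ≤ w + √(w ^ 2 - 1) := le_add_of_nonneg_right (Real.sqrt_nonneg _)
      _ = Real.exp (hdist u.1 v.1) :=
        (Real.exp_log (add_pos_of_pos_of_nonneg (by linarith) (Real.sqrt_nonneg _))).symm
  have hkey : 2 * ‖u.1 - v.1‖ ^ 2 = (w - 1) * ((1 - ‖u.1‖ ^ 2) * (1 - ‖v.1‖ ^ 2)) := by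
    rw [hw]
    field_simp
    ring
  nlinarith [mul_le_mul_of_nonneg_right hw_le hv.le, mul_nonneg (sub_nonneg.2 hw1) hv.le,
    sq_nonneg ‖u.1‖, sq_nonneg ‖u.1 - v.1‖]

lemma arcoshR_div_add_log {e v : ℝ} (he : 0 < e) (hev : e ≤ v) :
    arcoshR (v / e) + Real.log e = Real.log (v + √(v ^ 2 - e ^ 2)) := by
  have hsq : (v / e) ^ 2 - 1 = (v ^ 2 - e ^ 2) / e ^ 2 := by
    field_simp
  have hpos : 0 < v + √(v ^ 2 - e ^ 2) :=
    add_pos_of_pos_of_nonneg (he.trans_le hev) (Real.sqrt_nonneg _)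
  rw [arcoshR, hsq, Real.sqrt_div' _ (sq_nonneg e), Real.sqrt_sq he.le, ← add_div,
    Real.log_div hpos.ne' he.ne', sub_add_cancel]

end HyperbolicDistance

section Boundary

variable {ι : Type*} {l : Filter ι}

lemma exists_tendsto_sph (ξ : Sph) : ∃ z : ℕ → Ball, Tendsto (fun n => (z n).1) atTop (𝓝 ξ.1) := by
  have hlt : ∀ n : ℕ, ‖((n : ℝ) / (n + 1)) • ξ.1‖ < 1 := fun n => by
    rw [norm_smul, ξ.2, mul_one, Real.norm_of_nonneg (by positivity), div_lt_one (by positivity)]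
    linarith
  refine ⟨fun n => ⟨_, hlt n⟩, ?_⟩
  simpa using (tendsto_natCast_div_add_atTop (1 : ℝ)).smul_const ξ.1

lemma tendsto_smul_sph (g : G) {z : ι → Ball} {ξ : Sph}
    (hz : Tendsto (fun i => (z i).1) l (𝓝 ξ.1)) :
    Tendsto (fun i => (g • z i).1) l (𝓝 (g • ξ).1) :=
  tendsto_subtype_rng.mp (((GtoOP g).1.tendsto (sphInc ξ)).comp (tendsto_subtype_rng.mpr hz))

lemma tendsto_of_hdist_le {z w : ι → Ball} {ξ : Sph} {C : ℝ}
    (hz : Tendsto (fun i => (z i).1) l (𝓝 ξ.1)) (hC : ∀ᶠ i in l, hdist (w i).1 (z i).1 ≤ C) :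
    Tendsto (fun i => (w i).1) l (𝓝 ξ.1) := by
  have hnorm : Tendsto (fun i => 1 - ‖(z i).1‖ ^ 2) l (𝓝 0) := by
    simpa [ξ.2] using (tendsto_const_nhds (x := (1 : ℝ))).sub (hz.norm.pow 2)
  have hsq : Tendsto (fun i => ‖(w i).1 - (z i).1‖ ^ 2) l (𝓝 0) := by
    refine squeeze_zero' (.of_forall fun i => sq_nonneg _) ?_
      (by simpa using hnorm.const_mul (Real.exp C - 1))
    filter_upwards [hC] with i hi
    calc ‖(w i).1 - (z i).1‖ ^ 2
        ≤ (Real.exp (hdist (w i).1 (z i).1) - 1) * (1 - ‖(z i).1‖ ^ 2) :=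
          norm_sub_sq_le_of_hdist _ _
      _ ≤ (Real.exp C - 1) * (1 - ‖(z i).1‖ ^ 2) := by
          gcongr
          exact (one_sub_norm_sq_pos _).le
  have hsub : Tendsto (fun i => (w i).1 - (z i).1) l (𝓝 0) :=
    tendsto_zero_iff_norm_tendsto_zero.mpr
      (by simpa [Real.sqrt_sq (norm_nonneg _)] using hsq.sqrt)
  simpa using hsub.add hz

lemma smul_eq_self_of_hdist_le (g : G) [l.NeBot] {z : ι → Ball} {ξ : Sph} {C : ℝ}
    (hz : Tendsto (fun i => (z i).1) l (𝓝 ξ.1)) (hC : ∀ᶠ i in l, hdist (g • z i).1 (z i).1 ≤ C) :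
    g • ξ = ξ :=
  Subtype.ext (tendsto_nhds_unique (tendsto_smul_sph g hz) (tendsto_of_hdist_le hz hC))

lemma tendsto_hdist_add_log (ξ : Sph) (x : Ball) {z : ι → Ball}
    (hz : Tendsto (fun i => (z i).1) l (𝓝 ξ.1)) :
    Tendsto (fun i => hdist x.1 (z i).1 + Real.log (1 - ‖(z i).1‖ ^ 2)) l
      (𝓝 (Real.log 4 + Real.log (‖ξ.1 - x.1‖ ^ 2 / (1 - ‖x.1‖ ^ 2)))) := by
  have hx := one_sub_norm_sq_pos x
  set c := 2 * ‖x.1 - ξ.1‖ ^ 2 / (1 - ‖x.1‖ ^ 2)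
  have hc : 0 < c := div_pos (by rw [norm_sub_rev]; positivity [norm_sph_sub_ball_pos ξ x]) hx
  have he : Tendsto (fun i => 1 - ‖(z i).1‖ ^ 2) l (𝓝 0) := by
    simpa [ξ.2] using (tendsto_const_nhds (x := (1 : ℝ))).sub (hz.norm.pow 2)
  have hv : Tendsto (fun i => (1 - ‖(z i).1‖ ^ 2) + 2 * ‖x.1 - (z i).1‖ ^ 2 / (1 - ‖x.1‖ ^ 2))
      l (𝓝 c) := by
    simpa using he.add (((tendsto_const_nhds.sub hz).norm.pow 2).const_mul 2 |>.div_const _)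
  have hlim := (hv.add ((hv.pow 2).sub (he.pow 2)).sqrt).log (by positivity)
  have hval : c + √(c ^ 2 - 0 ^ 2) = 4 * (‖ξ.1 - x.1‖ ^ 2 / (1 - ‖x.1‖ ^ 2)) := by
    rw [zero_pow two_ne_zero, sub_zero, Real.sqrt_sq hc.le, norm_sub_rev]
    ring
  rw [hval, Real.log_mul four_ne_zero
    (div_pos (pow_pos (norm_sph_sub_ball_pos ξ x) 2) hx).ne'] at hlim
  refine hlim.congr fun i => ?_
  have hzi := one_sub_norm_sq_pos (z i)
  rw [← arcoshR_div_add_log hzi (le_add_of_nonneg_right (by positivity)), hdist]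
  congr 2
  field_simp

lemma tendsto_hdist_sub_hdist (ξ : Sph) (x y : Ball) {z : ι → Ball}
    (hz : Tendsto (fun i => (z i).1) l (𝓝 ξ.1)) :
    Tendsto (fun i => hdist x.1 (z i).1 - hdist y.1 (z i).1) l (𝓝 (busemann ξ x y)) := by
  have h := (tendsto_hdist_add_log ξ x hz).sub (tendsto_hdist_add_log ξ y hz)
  rw [add_sub_add_left_eq_sub, ← busemann_eq_log_sub_log] at h
  exact h.congr fun i => by ring

/-- Elements of `G` are only known to be homeomorphisms preserving `hdist`, so invariance of the
closed-form Busemann function goes through its characterization as a limit. -/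
lemma busemann_smul (g : G) (ξ : Sph) (x y : Ball) :
    busemann (g • ξ) (g • x) (g • y) = busemann ξ x y := by
  obtain ⟨z, hz⟩ := exists_tendsto_sph ξ
  refine tendsto_nhds_unique ?_ (tendsto_hdist_sub_hdist ξ x y hz)
  simpa only [hdist_smul] using
    tendsto_hdist_sub_hdist (g • ξ) (g • x) (g • y) (tendsto_smul_sph g hz)

end Boundary

lemma busemann_smul_eq_of_smul_eq {g : G} {ξ : Sph} (hg : g • ξ = ξ) (x y : Ball) :
    busemann ξ (g • x) x = busemann ξ (g • y) y := by
  have h := busemann_smul g ξ x y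
  rw [hg] at h
  linarith [busemann_cocycle ξ (g • x) (g • y) x, busemann_cocycle ξ (g • y) y x,
    busemann_cocycle ξ x y x, busemann_self ξ x]

section OneParameterSubgroup

variable {aOP : ℝ → G} {p₀ : Ball} {X₀m : Sph}

lemma aOP_zero (haHom : ∀ s t : ℝ, aOP (s + t) = aOP s * aOP t) : aOP 0 = 1 := by
  simpa using haHom 0 0

lemma aOP_neg (haHom : ∀ s t : ℝ, aOP (s + t) = aOP s * aOP t) (t : ℝ) :
    aOP (-t) = (aOP t)⁻¹ :=
  eq_inv_of_mul_eq_one_left (by rw [← haHom, neg_add_cancel, aOP_zero haHom])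

lemma hdist_aOP_smul (haHom : ∀ s t : ℝ, aOP (s + t) = aOP s * aOP t)
    (haDist : ∀ t : ℝ, hdist ((aOP t • p₀ : Ball)).1 p₀.1 = |t|) (s t : ℝ) :
    hdist (aOP s • p₀).1 (aOP t • p₀).1 = |s - t| := by
  rw [← hdist_smul (aOP (-t)), smul_smul, smul_smul, ← haHom, ← haHom, neg_add_cancel,
    aOP_zero haHom, one_smul, neg_add_eq_sub, haDist]

lemma tendsto_conj_smul_of_mem_Ngrp {n : G} (hn : n ∈ Ngrp aOP) (p : Ball) :
    Tendsto (fun t => (aOP t * n * (aOP t)⁻¹) • p) atTop (𝓝 p) := by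
  rw [tendsto_subtype_rng, Metric.tendsto_atTop]
  intro ε hε
  obtain ⟨T, hT⟩ := hn ε hε
  exact ⟨T, fun t ht => by rw [dist_eq_norm]; exact hT t ht ⟨p.1, p.2.le⟩⟩

lemma aOP_smul_sph (haHom : ∀ s t : ℝ, aOP (s + t) = aOP s * aOP t)
    (haDist : ∀ t : ℝ, hdist ((aOP t • p₀ : Ball)).1 p₀.1 = |t|)
    (hXm : Tendsto (fun s : ℝ => ((aOP (-s) • p₀ : Ball)).1) atTop (𝓝 X₀m.1)) (t : ℝ) :
    aOP t • X₀m = X₀m :=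
  smul_eq_self_of_hdist_le (aOP t) (C := |t|) hXm <| .of_forall fun s => by
    rw [smul_smul, ← haHom, hdist_aOP_smul haHom haDist, sub_neg_eq_add, neg_add_cancel_right]

lemma busemann_aOP_smul (haHom : ∀ s t : ℝ, aOP (s + t) = aOP s * aOP t)
    (haDist : ∀ t : ℝ, hdist ((aOP t • p₀ : Ball)).1 p₀.1 = |t|)
    (hXm : Tendsto (fun s : ℝ => ((aOP (-s) • p₀ : Ball)).1) atTop (𝓝 X₀m.1)) (t : ℝ) :
    busemann X₀m (aOP t • p₀) p₀ = t := by
  refine tendsto_nhds_unique (tendsto_hdist_sub_hdist X₀m _ p₀ hXm)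
    (tendsto_const_nhds.congr' ?_)
  filter_upwards [eventually_ge_atTop |t|] with s hs
  rw [hdist_aOP_smul haHom haDist, hdist_comm, haDist, abs_neg, sub_neg_eq_add,
    abs_of_nonneg (by linarith [neg_abs_le t] : 0 ≤ t + s),
    abs_of_nonneg ((abs_nonneg t).trans hs), add_sub_cancel_right]

lemma smul_sph_of_mem_Ngrp (haHom : ∀ s t : ℝ, aOP (s + t) = aOP s * aOP t)
    (hXm : Tendsto (fun s : ℝ => ((aOP (-s) • p₀ : Ball)).1) atTop (𝓝 X₀m.1))
    {n : G} (hn : n ∈ Ngrp aOP) : n • X₀m = X₀m := by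
  have h := ((continuous_hdist_left p₀).tendsto p₀).comp (tendsto_conj_smul_of_mem_Ngrp hn p₀)
  rw [hdist_self] at h
  refine smul_eq_self_of_hdist_le n (C := 1) hXm ?_
  filter_upwards [h.eventually_le_const one_pos] with s hs
  rwa [aOP_neg haHom, ← hdist_smul (aOP s), smul_inv_smul, smul_smul, smul_smul]

lemma busemann_smul_of_mem_Ngrp (haHom : ∀ s t : ℝ, aOP (s + t) = aOP s * aOP t)
    (haDist : ∀ t : ℝ, hdist ((aOP t • p₀ : Ball)).1 p₀.1 = |t|)
    (hXm : Tendsto (fun s : ℝ => ((aOP (-s) • p₀ : Ball)).1) atTop (𝓝 X₀m.1))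
    {n : G} (hn : n ∈ Ngrp aOP) : busemann X₀m (n • p₀) p₀ = 0 := by
  have h := ((continuous_busemann_left X₀m p₀).tendsto p₀).comp
    (tendsto_conj_smul_of_mem_Ngrp hn p₀)
  rw [busemann_self] at h
  refine tendsto_nhds_unique (tendsto_const_nhds.congr fun s => ?_) h
  calc busemann X₀m (n • p₀) p₀
      = busemann X₀m (n • (aOP s)⁻¹ • p₀) ((aOP s)⁻¹ • p₀) :=
        busemann_smul_eq_of_smul_eq (smul_sph_of_mem_Ngrp haHom hXm hn) _ _
    _ = busemann (aOP s • X₀m) (aOP s • n • (aOP s)⁻¹ • p₀) (aOP s • (aOP s)⁻¹ • p₀) :=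
        (busemann_smul _ _ _ _).symm
    _ = busemann X₀m ((aOP s * n * (aOP s)⁻¹) • p₀) p₀ := by
        rw [aOP_smul_sph haHom haDist hXm, smul_inv_smul, smul_smul, smul_smul]

lemma inv_aOP_mul_mul_smul_sph (haHom : ∀ s t : ℝ, aOP (s + t) = aOP s * aOP t)
    (haDist : ∀ t : ℝ, hdist ((aOP t • p₀ : Ball)).1 p₀.1 = |t|)
    (hXm : Tendsto (fun s : ℝ => ((aOP (-s) • p₀ : Ball)).1) atTop (𝓝 X₀m.1))
    (t : ℝ) {n : G} (hn : n ∈ Ngrp aOP) (k : G) :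
    (aOP t * n * k)⁻¹ • X₀m = k⁻¹ • X₀m := by
  rw [mul_inv_rev, mul_inv_rev, mul_smul, mul_smul,
    inv_smul_eq_iff.mpr (aOP_smul_sph haHom haDist hXm t).symm,
    inv_smul_eq_iff.mpr (smul_sph_of_mem_Ngrp haHom hXm hn).symm]

lemma busemann_aOP_mul_mul_smul (haHom : ∀ s t : ℝ, aOP (s + t) = aOP s * aOP t)
    (haDist : ∀ t : ℝ, hdist ((aOP t • p₀ : Ball)).1 p₀.1 = |t|)
    (hXm : Tendsto (fun s : ℝ => ((aOP (-s) • p₀ : Ball)).1) atTop (𝓝 X₀m.1))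
    (t : ℝ) {n k : G} (hn : n ∈ Ngrp aOP) (hk : k ∈ Kstab p₀) :
    busemann X₀m ((aOP t * n * k) • p₀) p₀ = t := by
  have hn' := busemann_smul (aOP t) X₀m (n • p₀) p₀
  rw [aOP_smul_sph haHom haDist hXm, busemann_smul_of_mem_Ngrp haHom haDist hXm hn] at hn'
  rw [mul_smul, mul_smul, MulAction.mem_stabilizer_iff.mp hk,
    busemann_cocycle X₀m _ (aOP t • p₀), hn', busemann_aOP_smul haHom haDist hXm, zero_add]

end OneParameterSubgroup

section FrakR

variable {Γ : Subgroup G} {p₀ o : Ball} {aOP : ℝ → G} {g₀ : G} {X₀m : Sph} {Es : Set Sph}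

lemma frakR_eq (haHom : ∀ s t : ℝ, aOP (s + t) = aOP s * aOP t)
    (haDist : ∀ t : ℝ, hdist ((aOP t • p₀ : Ball)).1 p₀.1 = |t|)
    (hXm : Tendsto (fun s : ℝ => ((aOP (-s) • p₀ : Ball)).1) atTop (𝓝 X₀m.1))
    (hANK : ∀ g : G, ∃ t n k, n ∈ Ngrp aOP ∧ k ∈ Kstab p₀ ∧ g = aOP t * n * k) (g : G) :
    frakR Γ p₀ aOP g₀ X₀m Es g = if g⁻¹ • X₀m ∈ g₀⁻¹ • Es then
      Real.exp (-(critExp Γ) * busemann X₀m (g • p₀) p₀) else 0 := by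
  have hval : ∀ t n k, n ∈ Ngrp aOP → k ∈ Kstab p₀ → g = aOP t * n * k →
      (if k⁻¹ • X₀m ∈ g₀⁻¹ • Es then Real.exp (-(critExp Γ) * t) else 0) =
        if g⁻¹ • X₀m ∈ g₀⁻¹ • Es then
          Real.exp (-(critExp Γ) * busemann X₀m (g • p₀) p₀) else 0 := by
    rintro t n k hn hk rfl
    rw [inv_aOP_mul_mul_smul_sph haHom haDist hXm t hn,
      busemann_aOP_mul_mul_smul haHom haDist hXm t hn hk]
  refine (congrArg sSup (Set.eq_singleton_iff_unique_mem.mpr ⟨?_, ?_⟩)).trans (csSup_singleton _)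
  · obtain ⟨t, n, k, hn, hk, hg⟩ := hANK g
    exact ⟨t, n, k, hn, hk, hg, (hval t n k hn hk hg).symm⟩
  · rintro r ⟨t, n, k, hn, hk, hg, rfl⟩
    exact hval t n k hn hk hg

lemma frakR_inv_mul_eq_indicator (haHom : ∀ s t : ℝ, aOP (s + t) = aOP s * aOP t)
    (haDist : ∀ t : ℝ, hdist ((aOP t • p₀ : Ball)).1 p₀.1 = |t|)
    (hXm : Tendsto (fun s : ℝ => ((aOP (-s) • p₀ : Ball)).1) atTop (𝓝 X₀m.1))
    (hANK : ∀ g : G, ∃ t n k, n ∈ Ngrp aOP ∧ k ∈ Kstab p₀ ∧ g = aOP t * n * k)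
    (hg₀ : g₀ • p₀ = o) {k : G} (hk : k ∈ Kstab p₀) :
    frakR Γ p₀ aOP g₀ X₀m Es (k⁻¹ * g₀) =
      Es.indicator (fun ξ => Real.exp (-(critExp Γ) * busemann ξ o p₀)) (k • X₀m) := by
  have hβ : busemann X₀m (k⁻¹ • o) p₀ = busemann (k • X₀m) o p₀ := by
    rw [← busemann_smul k, smul_inv_smul, MulAction.mem_stabilizer_iff.mp hk]
  rw [frakR_eq haHom haDist hXm hANK, mul_inv_rev, inv_inv, mul_smul, Set.smul_mem_smul_set_iff,
    mul_smul, hg₀, hβ, Set.indicator_apply]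

end FrakR

theorem frakR_integral_eq_PS_measure_general
    (Γ : Subgroup G)
    (ν : Ball → Measure Sph) (hν : IsPSDensity Γ ν)
    (p₀ o : Ball) (g₀ : G) (hg₀ : g₀ • p₀ = o)
    (aOP : ℝ → G) (haHom : ∀ s t : ℝ, aOP (s + t) = aOP s * aOP t)
    (haDist : ∀ t : ℝ, hdist ((aOP t • p₀ : Ball)).1 p₀.1 = |t|)
    (X₀m : Sph)
    (hXm : Tendsto (fun s : ℝ => ((aOP (-s) • p₀ : Ball)).1) atTop (𝓝 X₀m.1))
    -- the `ANK` decomposition of `G`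
    (hANK : ∀ g : G, ∃ t n k, n ∈ Ngrp aOP ∧ k ∈ Kstab p₀ ∧ g = aOP t * n * k)
    (κ : Sph → G) (hκ : ∀ η : Sph, κ η ∈ Kstab p₀ ∧ κ η • X₀m = η)
    (Es : Set Sph) (hEmeas : MeasurableSet Es) :
    ∫⁻ η, ENNReal.ofReal (frakR Γ p₀ aOP g₀ X₀m Es ((κ η)⁻¹ * g₀)) ∂(ν p₀) =
      ν o Es := by
  have hintegrand : ∀ η, ENNReal.ofReal (frakR Γ p₀ aOP g₀ X₀m Es ((κ η)⁻¹ * g₀)) =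
      Es.indicator (fun ξ => ENNReal.ofReal (Real.exp (-(critExp Γ) * busemann ξ o p₀))) η := by
    intro η
    rw [frakR_inv_mul_eq_indicator haHom haDist hXm hANK hg₀ (hκ η).1, (hκ η).2]
    exact (congrFun (Set.indicator_comp_of_zero ENNReal.ofReal_zero) η).symm
  rw [lintegral_congr hintegrand, lintegral_indicator hEmeas, hν.2.2.2.2 p₀ o,
    withDensity_apply _ hEmeas]

/-- **Lemma 3.2 (Oh–Shah).**  For any Borel subset `E ⊆ S²`,
`∫_{k ∈ K/M} 𝔯_E(k⁻¹ g₀) dν_{p₀}(k X₀⁻) = ν_o(E)`, where `K/M` is identified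
with `S²` via `k ↦ k(X₀⁻)` (realized through a section `κ : S² → K`). -/
theorem frakR_integral_eq_PS_measure
    (Γ : Subgroup G) (hKl : IsKleinian Γ) (hNE : NonElementary Γ)
    (hGF : GeometricallyFinite Γ)
    (ν : Ball → Measure Sph) (hν : IsPSDensity Γ ν)
    (p₀ o : Ball) (g₀ : G) (hg₀ : g₀ • p₀ = o)
    (aOP : ℝ → G) (haHom : ∀ s t : ℝ, aOP (s + t) = aOP s * aOP t)
    (haDist : ∀ t : ℝ, hdist ((aOP t • p₀ : Ball)).1 p₀.1 = |t|)
    (X₀m : Sph)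
    (hXm : Tendsto (fun s : ℝ => ((aOP (-s) • p₀ : Ball)).1) atTop (𝓝 X₀m.1))
    -- the `ANK` decomposition of `G`
    (hANK : ∀ g : G, ∃ t n k, n ∈ Ngrp aOP ∧ k ∈ Kstab p₀ ∧ g = aOP t * n * k)
    (κ : Sph → G) (hκ : ∀ η : Sph, κ η ∈ Kstab p₀ ∧ κ η • X₀m = η)
    (Es : Set Sph) (hEmeas : MeasurableSet Es) :
    ∫⁻ η, ENNReal.ofReal (frakR Γ p₀ aOP g₀ X₀m Es ((κ η)⁻¹ * g₀)) ∂(ν p₀) =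
      ν o Es :=
  frakR_integral_eq_PS_measure_general Γ ν hν p₀ o g₀ hg₀ aOP haHom haDist X₀m hXm hANK κ hκ Es
    hEmeas

end CirclesOnSphere
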